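/- (Uniqueness of the scaling class) Let (X, μ) be a probability space and T : X → X a measure-preserving map. If (c_n) and (c'_n) are both scaling sequences for T, then 0 < liminf_{n→∞} c_n/c'_n ≤ limsup_{n→∞} c_n/c'_n < ∞; that is, any two scaling sequences for T are equivalent. -/

import Mathlib

open MeasureTheory Filter Set
open scoped ENNReal

/-- Shannon entropy of a finite measurable partition, encoded as a map `f : X → F`
into a finite set, with respect to the measure `μ` (convention `0 log 0 = 0`). -/
noncomputable def shannonEntropy {X : Type*} [MeasurableSpace X] (μ : Measure X)
    {F : Type*} [Fintype F] (f : X → F) : ℝ :=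
  -∑ a : F, (μ (f ⁻¹' {a})).toReal * Real.log (μ (f ⁻¹' {a})).toReal

/-- `H(ξ_T^n)`: the Shannon entropy of the joint partition
`x ↦ (f x, f (T x), …, f (T^[n-1] x))`. -/
noncomputable def jointH {X : Type*} [MeasurableSpace X] (μ : Measure X)
    (T : X → X) {F : Type*} [Fintype F] (f : X → F) (n : ℕ) : ℝ :=
  shannonEntropy μ (fun x => (fun i : Fin n => f (T^[(i : ℕ)] x)))

/-- The `ε`-entropy `H_ε(f)`: the infimum, over measurable sets `A` with
`μ A > 1 − ε`, of the Shannon entropy of `f` with respect to the normalized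
restriction of `μ` to `A`. -/
noncomputable def epsEntropy {X : Type*} [MeasurableSpace X] (μ : Measure X)
    {F : Type*} [Fintype F] (f : X → F) (ε : ℝ) : ℝ :=
  sInf {x : ℝ | ∃ A : Set X, MeasurableSet A ∧ ENNReal.ofReal (1 - ε) < μ A ∧
    x = shannonEntropy ((μ A)⁻¹ • μ.restrict A) f}

/-- The joint partition map `ξ_T^n : x ↦ (f x, f (T x), …, f (T^[n-1] x))`. -/
def jointMap {X F : Type*} (T : X → X) (f : X → F) (n : ℕ) : X → (Fin n → F) :=
  fun x => (fun i : Fin n => f (T^[(i : ℕ)] x))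

/-- `(c_n)` is a scaling sequence for `T`: the `c_n` are positive (for `n ≥ 1`);
for every finite partition `f`, `lim_{ε→0} limsup_n H_ε(ξ_T^n)/c_n < ∞`; and there
is a finite partition `f` with `lim_{ε→0} liminf_n H_ε(ξ_T^n)/c_n > 0`. Since
`H_ε` is nonincreasing in `ε`, the limits as `ε → 0⁺` are the suprema over
`ε ∈ (0,1)`; all quantities are computed in `[0,∞]`. -/
def IsScalingSeq {X : Type*} [MeasurableSpace X] (μ : Measure X) (T : X → X)
    (c : ℕ → ℝ) : Prop :=
  (∀ n : ℕ, 1 ≤ n → 0 < c n) ∧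
  (∀ (k : ℕ) (f : X → Fin k), Measurable f →
    (⨆ ε ∈ Set.Ioo (0 : ℝ) 1,
      Filter.limsup
        (fun n : ℕ => ENNReal.ofReal (epsEntropy μ (jointMap T f n) ε / c n))
        Filter.atTop) < ⊤) ∧
  (∃ (k : ℕ) (f : X → Fin k), Measurable f ∧
    0 < ⨆ ε ∈ Set.Ioo (0 : ℝ) 1,
      Filter.liminf
        (fun n : ℕ => ENNReal.ofReal (epsEntropy μ (jointMap T f n) ε / c n))
        Filter.atTop)

/-!
If a partition `f` and an `ε` witness `liminf_n H_ε(ξ_T^n)/c_n > 0`, the same entropies satisfy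
`limsup_n H_ε(ξ_T^n)/c'_n < ∞`, so `c_n/c'_n = (H_ε(ξ_T^n)/c'_n)/(H_ε(ξ_T^n)/c_n)` is eventually
bounded. Exchanging the roles of `c` and `c'` bounds `c'_n/c_n`.
-/

namespace ENNReal

lemma ofReal_div_eq_ofReal_div_mul_inv {a b g : ℝ} (ha : 0 < a) (hb : 0 < b) (hg : 0 < g) :
    ENNReal.ofReal (a / b) = ENNReal.ofReal (g / b) * (ENNReal.ofReal (g / a))⁻¹ := by
  rw [← ENNReal.ofReal_inv_of_pos (by positivity), ← ENNReal.ofReal_mul (by positivity)]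
  congr 1
  field_simp

lemma limsup_ofReal_div_lt_top {c c' g : ℕ → ℝ}
    (hc : ∀ᶠ n in atTop, 0 < c n) (hc' : ∀ᶠ n in atTop, 0 < c' n)
    (hlow : 0 < liminf (fun n => ENNReal.ofReal (g n / c n)) atTop)
    (hup : limsup (fun n => ENNReal.ofReal (g n / c' n)) atTop < ⊤) :
    limsup (fun n => ENNReal.ofReal (c n / c' n)) atTop < ⊤ := by
  have hg : ∀ᶠ n in atTop, 0 < g n := by
    filter_upwards [hc, eventually_lt_of_lt_liminf hlow] with n hcn hn
    exact (div_pos_iff_of_pos_right hcn).mp (ENNReal.ofReal_pos.mp hn)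
  have hratio : (fun n => ENNReal.ofReal (c n / c' n)) =ᶠ[atTop]
      (fun n => ENNReal.ofReal (g n / c' n)) * fun n => (ENNReal.ofReal (g n / c n))⁻¹ := by
    filter_upwards [hc, hc', hg] with n hcn hc'n hgn
    exact ofReal_div_eq_ofReal_div_mul_inv hcn hc'n hgn
  calc limsup (fun n => ENNReal.ofReal (c n / c' n)) atTop
      ≤ limsup (fun n => ENNReal.ofReal (g n / c' n)) atTop *
          (liminf (fun n => ENNReal.ofReal (g n / c n)) atTop)⁻¹ := by
        have hinv : limsup (fun n => (ENNReal.ofReal (g n / c n))⁻¹) atTop ≠ ⊤ := by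
          rw [← ENNReal.inv_liminf]
          exact ENNReal.inv_ne_top.mpr hlow.ne'
        rw [limsup_congr hratio, ENNReal.inv_liminf]
        exact ENNReal.limsup_mul_le' (Or.inr hinv) (Or.inl hup.ne)
    _ < ⊤ := ENNReal.mul_lt_top hup (ENNReal.inv_lt_top.mpr hlow)

lemma liminf_ofReal_div_pos {c c' : ℕ → ℝ}
    (hc : ∀ᶠ n in atTop, 0 < c n) (hc' : ∀ᶠ n in atTop, 0 < c' n)
    (h : limsup (fun n => ENNReal.ofReal (c' n / c n)) atTop < ⊤) :
    0 < liminf (fun n => ENNReal.ofReal (c n / c' n)) atTop := by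
  have hinv : (fun n => ENNReal.ofReal (c n / c' n)) =ᶠ[atTop]
      fun n => (ENNReal.ofReal (c' n / c n))⁻¹ := by
    filter_upwards [hc, hc'] with n hcn hc'n
    rw [← ENNReal.ofReal_inv_of_pos (by positivity), inv_div]
  rw [liminf_congr hinv, ← ENNReal.inv_limsup]
  exact ENNReal.inv_pos.mpr h.ne

end ENNReal

namespace IsScalingSeq

variable {X : Type*} [MeasurableSpace X] {μ : Measure X} {T : X → X} {c c' : ℕ → ℝ}

lemma eventually_pos (hc : IsScalingSeq μ T c) : ∀ᶠ n in atTop, 0 < c n := by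
  filter_upwards [eventually_ge_atTop 1] with n hn using hc.1 n hn

lemma limsup_ofReal_div_lt_top (hc : IsScalingSeq μ T c) (hc' : IsScalingSeq μ T c') :
    limsup (fun n => ENNReal.ofReal (c n / c' n)) atTop < ⊤ := by
  obtain ⟨k, f, hf, hlow⟩ := hc.2.2
  obtain ⟨ε, hε, hlowε⟩ := lt_biSup_iff.mp hlow
  have hupε : limsup (fun n => ENNReal.ofReal (epsEntropy μ (jointMap T f n) ε / c' n)) atTop
      < ⊤ :=
    (le_biSup (fun ε => limsup (fun n =>
      ENNReal.ofReal (epsEntropy μ (jointMap T f n) ε / c' n)) atTop) hε).trans_lt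
      (hc'.2.1 k f hf)
  exact ENNReal.limsup_ofReal_div_lt_top hc.eventually_pos hc'.eventually_pos hlowε hupε

end IsScalingSeq

theorem scaling_sequences_equivalent_general {X : Type*} [MeasurableSpace X] (μ : Measure X)
    (T : X → X)
    (c c' : ℕ → ℝ) (hc : IsScalingSeq μ T c) (hc' : IsScalingSeq μ T c') :
    0 < Filter.liminf (fun n : ℕ => ENNReal.ofReal (c n / c' n)) Filter.atTop ∧
    Filter.liminf (fun n : ℕ => ENNReal.ofReal (c n / c' n)) Filter.atTop ≤
      Filter.limsup (fun n : ℕ => ENNReal.ofReal (c n / c' n)) Filter.atTop ∧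
    Filter.limsup (fun n : ℕ => ENNReal.ofReal (c n / c' n)) Filter.atTop < ⊤ :=
  ⟨ENNReal.liminf_ofReal_div_pos hc.eventually_pos hc'.eventually_pos
      (hc'.limsup_ofReal_div_lt_top hc),
    liminf_le_limsup, hc.limsup_ofReal_div_lt_top hc'⟩

/-- Uniqueness of the scaling class: any two scaling sequences for
the same measure-preserving map are equivalent:
`0 < liminf c_n/c'_n ≤ limsup c_n/c'_n < ∞`. -/
theorem scaling_sequences_equivalent {X : Type*} [MeasurableSpace X] (μ : Measure X)
    [IsProbabilityMeasure μ] (T : X → X) (hT : MeasurePreserving T μ μ)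
    (c c' : ℕ → ℝ) (hc : IsScalingSeq μ T c) (hc' : IsScalingSeq μ T c') :
    0 < Filter.liminf (fun n : ℕ => ENNReal.ofReal (c n / c' n)) Filter.atTop ∧
    Filter.liminf (fun n : ℕ => ENNReal.ofReal (c n / c' n)) Filter.atTop ≤
      Filter.limsup (fun n : ℕ => ENNReal.ofReal (c n / c' n)) Filter.atTop ∧
    Filter.limsup (fun n : ℕ => ENNReal.ofReal (c n / c' n)) Filter.atTop < ⊤ :=
  scaling_sequences_equivalent_general μ T c c' hc hc'
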